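/- (High-low frequency estimate for B_2) Let s ≥ 0, 0 ≤ α < 1/2, and let N be a positive integer. Then for every t ∈ ℝ there is a constant C(s,α), independent of N, such that ‖B_2(𝒫u, 𝒬v)‖_{Ḣ^s} ≤ C(s,α) (1/N) ‖u‖_{Ḣ^{−α}} ‖v‖_{Ḣ^s} for all u ∈ Ḣ^{−α} and v ∈ Ḣ^s. -/

import Mathlib

/-!
For `|k₁| ≤ N < |k₂|` the output frequency `k = k₁ + k₂` satisfies `|k| ≤ 2 |k₂|`, so
`|k|^s / (|k₁| |k₂|) ≤ (2^s / N) |k₂|^s / |k₁|`. Hence `|k|^s |B₂(𝒫u, 𝒬v)_k|` is at most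
`2^s / (6N)` times the convolution of `h k = |(𝒫u)_k| / |k|` with `|k|^s |(𝒬v)_k|`.
Young's inequality `ℓ¹ * ℓ² ⊆ ℓ²` bounds the `Ḣ^s` norm by `2^s / (6N) ‖h‖_{ℓ¹} ‖v‖_{Ḣ^s}`, and
by Cauchy–Schwarz `‖h‖_{ℓ¹} ≤ (∑ |k|^(2α-2))^(1/2) ‖u‖_{Ḣ^{-α}}`, a finite constant as `α < 1/2`.
-/

open MeasureTheory Set

noncomputable section

/-- The weight `|k|^(2s)` appearing in the `Ḣ^s` norm. -/
def wt (s : ℝ) (k : ℤ) : ℝ := ((|k| : ℤ) : ℝ) ^ (2 * s)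

/-- Membership in the homogeneous Sobolev space `Ḣ^s` of sequences indexed by
nonzero integers. -/
def memH (s : ℝ) (u : ℤ → ℂ) : Prop :=
  Summable (fun k : {k : ℤ // k ≠ 0} => wt s k.1 * ‖u k.1‖ ^ 2)

/-- The `Ḣ^s` norm. -/
def hnorm (s : ℝ) (u : ℤ → ℂ) : ℝ :=
  Real.sqrt (∑' k : {k : ℤ // k ≠ 0}, wt s k.1 * ‖u k.1‖ ^ 2)

/-- The `(Ḣ^s)²` norm of a pair. -/
def hnorm2 (s : ℝ) (u v : ℤ → ℂ) : ℝ :=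
  Real.sqrt (hnorm s u ^ 2 + hnorm s v ^ 2)

/-- The conserved energy functional `𝓔(u,v) = 2‖u‖² + 2‖v‖² + ‖u-v‖²` (in `Ḣ^0`). -/
def energyE (u v : ℤ → ℂ) : ℝ :=
  2 * hnorm 0 u ^ 2 + 2 * hnorm 0 v ^ 2 + hnorm 0 (fun k => u k - v k) ^ 2

/-- Projection `𝒫` onto the low Fourier modes `|k| ≤ N`. -/
def Plow (N : ℕ) (u : ℤ → ℂ) : ℤ → ℂ := fun k => if |k| ≤ (N : ℤ) then u k else 0

/-- Projection `𝒬 = I - 𝒫` onto the high Fourier modes `|k| > N`. -/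
def Qhigh (N : ℕ) (u : ℤ → ℂ) : ℤ → ℂ := fun k => if |k| ≤ (N : ℤ) then 0 else u k

/-- The oscillating factor `e^{3 i k k₁ k₂ t}` with `k₂ = k - k₁`. -/
def osc2 (t : ℝ) (k k1 : ℤ) : ℂ :=
  Complex.exp (3 * Complex.I * (k : ℂ) * (k1 : ℂ) * ((k - k1 : ℤ) : ℂ) * (t : ℂ))

/-- The oscillating factor `e^{3 i (k₁+k₂)(k₂+k₃)(k₁+k₃) t}`. -/
def osc3 (t : ℝ) (k1 k2 k3 : ℤ) : ℂ :=
  Complex.exp (3 * Complex.I * ((k1 + k2 : ℤ) : ℂ) * ((k2 + k3 : ℤ) : ℂ) *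
    ((k1 + k3 : ℤ) : ℂ) * (t : ℂ))

/-- The bilinear operator `B₁` at time `t`. -/
def B1 (t : ℝ) (φ ψ : ℤ → ℂ) : ℤ → ℂ := fun k =>
  Complex.I * (k : ℂ) / 2 *
    ∑' k1 : ℤ, if k1 ≠ 0 ∧ k - k1 ≠ 0 then osc2 t k k1 * φ k1 * ψ (k - k1) else 0

/-- The bilinear operator `B₂` at time `t`. -/
def B2 (t : ℝ) (φ ψ : ℤ → ℂ) : ℤ → ℂ := fun k =>
  (1 / 6 : ℂ) *
    ∑' k1 : ℤ, if k1 ≠ 0 ∧ k - k1 ≠ 0 then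
      osc2 t k k1 * φ k1 * ψ (k - k1) / ((k1 : ℂ) * ((k - k1 : ℤ) : ℂ)) else 0

/-- The trilinear operator `R₃` at time `t`. -/
def R3 (t : ℝ) (φ ψ ξ : ℤ → ℂ) : ℤ → ℂ := fun k =>
  ∑' p : ℤ × ℤ,
    if p.1 ≠ 0 ∧ p.2 ≠ 0 ∧ k - p.1 - p.2 ≠ 0 then
      osc3 t p.1 p.2 (k - p.1 - p.2) * φ p.1 * ψ p.2 * ξ (k - p.1 - p.2) / (p.1 : ℂ)
    else 0

/-- The resonant part `R₃res` (sum over `(k₁+k₂)(k₂+k₃)(k₁+k₃) = 0`). -/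
def R3res (φ ψ ξ : ℤ → ℂ) : ℤ → ℂ := fun k =>
  ∑' p : ℤ × ℤ,
    if p.1 ≠ 0 ∧ p.2 ≠ 0 ∧ k - p.1 - p.2 ≠ 0 ∧
        (p.1 + p.2) * (p.2 + (k - p.1 - p.2)) * (p.1 + (k - p.1 - p.2)) = 0 then
      φ p.1 * ψ p.2 * ξ (k - p.1 - p.2) / (p.1 : ℂ)
    else 0

/-- The nonresonant part `R₃nres` (sum over `(k₁+k₂)(k₂+k₃)(k₁+k₃) ≠ 0`). -/
def R3nres (t : ℝ) (φ ψ ξ : ℤ → ℂ) : ℤ → ℂ := fun k =>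
  ∑' p : ℤ × ℤ,
    if p.1 ≠ 0 ∧ p.2 ≠ 0 ∧ k - p.1 - p.2 ≠ 0 ∧
        (p.1 + p.2) * (p.2 + (k - p.1 - p.2)) * (p.1 + (k - p.1 - p.2)) ≠ 0 then
      osc3 t p.1 p.2 (k - p.1 - p.2) * φ p.1 * ψ p.2 * ξ (k - p.1 - p.2) / (p.1 : ℂ)
    else 0

/-- The operator `R₃nres1(φ,ψ,ξ) = R₃nres(φ,𝒫ψ,ξ) + R₃nres(φ,𝒬ψ,𝒫ξ)`. -/
def R3nres1 (N : ℕ) (t : ℝ) (φ ψ ξ : ℤ → ℂ) : ℤ → ℂ := fun k =>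
  R3nres t φ (Plow N ψ) ξ k + R3nres t φ (Qhigh N ψ) (Plow N ξ) k

/-- The trilinear operator `B₃` (nonresonant indices). -/
def B3 (t : ℝ) (φ ψ ξ : ℤ → ℂ) : ℤ → ℂ := fun k =>
  ∑' p : ℤ × ℤ,
    if p.1 ≠ 0 ∧ p.2 ≠ 0 ∧ k - p.1 - p.2 ≠ 0 ∧
        (p.1 + p.2) * (p.2 + (k - p.1 - p.2)) * (p.1 + (k - p.1 - p.2)) ≠ 0 then
      osc3 t p.1 p.2 (k - p.1 - p.2) * φ p.1 * ψ p.2 * ξ (k - p.1 - p.2) /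
        ((p.1 : ℂ) * ((p.1 + p.2 : ℤ) : ℂ) * ((p.2 + (k - p.1 - p.2) : ℤ) : ℂ) *
          ((p.1 + (k - p.1 - p.2) : ℤ) : ℂ))
    else 0

/-- The operator `B₃₀(φ,ψ,ξ) = B₃(φ,𝒬ψ,𝒬ξ)`. -/
def B30 (N : ℕ) (t : ℝ) (φ ψ ξ : ℤ → ℂ) : ℤ → ℂ :=
  B3 t φ (Qhigh N ψ) (Qhigh N ξ)

/-- The phase `Φ(k₁,k₂,k₃,k₄) = (k₁+k₂+k₃+k₄)³ - k₁³ - k₂³ - k₃³ - k₄³`. -/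
def Phi4 (k1 k2 k3 k4 : ℤ) : ℤ :=
  (k1 + k2 + k3 + k4) ^ 3 - k1 ^ 3 - k2 ^ 3 - k3 ^ 3 - k4 ^ 3

/-- The oscillating factor `e^{i Φ(k₁,k₂,k₃,k₄) t}`. -/
def osc4 (t : ℝ) (k1 k2 k3 k4 : ℤ) : ℂ :=
  Complex.exp (Complex.I * ((Phi4 k1 k2 k3 k4 : ℤ) : ℂ) * (t : ℂ))

/-- The quadrilinear operator `B₄¹`. -/
def B41 (t : ℝ) (φ ψ ξ η : ℤ → ℂ) : ℤ → ℂ := fun k =>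
  ∑' q : ℤ × ℤ × ℤ,
    let k1 := q.1; let k2 := q.2.1; let k3 := q.2.2; let k4 := k - k1 - k2 - k3
    if k1 ≠ 0 ∧ k2 ≠ 0 ∧ k3 ≠ 0 ∧ k4 ≠ 0 ∧
        (k1 + k2) * (k1 + k3 + k4) * (k2 + k3 + k4) ≠ 0 then
      osc4 t k1 k2 k3 k4 * φ k1 * ψ k2 * ξ k3 * η k4 /
        (((k1 + k2 : ℤ) : ℂ) * ((k1 + k3 + k4 : ℤ) : ℂ) * ((k2 + k3 + k4 : ℤ) : ℂ))
    else 0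

/-- The quadrilinear operator `B₄²`. -/
def B42 (t : ℝ) (φ ψ ξ η : ℤ → ℂ) : ℤ → ℂ := fun k =>
  ∑' q : ℤ × ℤ × ℤ,
    let k1 := q.1; let k2 := q.2.1; let k3 := q.2.2; let k4 := k - k1 - k2 - k3
    if k1 ≠ 0 ∧ k2 ≠ 0 ∧ k3 ≠ 0 ∧ k4 ≠ 0 ∧
        (k1 + k2) * (k1 + k3 + k4) * (k2 + k3 + k4) ≠ 0 then
      osc4 t k1 k2 k3 k4 * ((k3 + k4 : ℤ) : ℂ) * φ k1 * ψ k2 * ξ k3 * η k4 /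
        ((k1 : ℂ) * ((k1 + k2 : ℤ) : ℂ) * ((k1 + k3 + k4 : ℤ) : ℂ) *
          ((k2 + k3 + k4 : ℤ) : ℂ))
    else 0

/-- The quadrilinear operator `B₄ = B₄¹ + B₄²`. -/
def B4 (t : ℝ) (φ ψ ξ η : ℤ → ℂ) : ℤ → ℂ := fun k =>
  B41 t φ ψ ξ η k + B42 t φ ψ ξ η k

/-- Right-hand side (before the `ik/2` factor and integration) of the `u`-equation
of the transformed Majda–Biello system. -/
def mbRHSu (u v : ℝ → ℤ → ℂ) (τ : ℝ) (k : ℤ) : ℂ :=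
  ∑' k1 : ℤ, if k1 ≠ 0 ∧ k - k1 ≠ 0 then
    osc2 τ k k1 * (u τ k1 * v τ (k - k1) - u τ k1 * u τ (k - k1)) else 0

/-- Right-hand side (before the `ik/2` factor and integration) of the `v`-equation
of the transformed Majda–Biello system. -/
def mbRHSv (u v : ℝ → ℤ → ℂ) (τ : ℝ) (k : ℤ) : ℂ :=
  ∑' k1 : ℤ, if k1 ≠ 0 ∧ k - k1 ≠ 0 then
    osc2 τ k k1 * (u τ k1 * v τ (k - k1) - v τ k1 * v τ (k - k1)) else 0

/-- `(u,v)` is a solution of the transformed Majda–Biello system on `[0,T]`: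
it belongs to `L^∞([0,T];(Ḣ^0)²)` and satisfies the integrated equations. -/
def IsMBSolution (T : ℝ) (u v : ℝ → ℤ → ℂ) : Prop :=
  (∃ M : ℝ, ∀ t ∈ Icc (0 : ℝ) T,
      memH 0 (u t) ∧ memH 0 (v t) ∧ hnorm2 0 (u t) (v t) ≤ M) ∧
  ∀ k : ℤ, k ≠ 0 → ∀ t ∈ Icc (0 : ℝ) T,
    (u t k - u 0 k = Complex.I * (k : ℂ) / 2 * (∫ τ in (0 : ℝ)..t, mbRHSu u v τ k)) ∧
    (v t k - v 0 k = Complex.I * (k : ℂ) / 2 * (∫ τ in (0 : ℝ)..t, mbRHSv u v τ k))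

/-- The (finite) right-hand side of the `u`-equation of the `N`-th Galerkin system. -/
def galRHSu (N : ℕ) (t : ℝ) (f g : ℤ → ℂ) (k : ℤ) : ℂ :=
  Complex.I * (k : ℂ) / 2 * ∑ k1 ∈ Finset.Icc (-(N : ℤ)) (N : ℤ),
    (if k1 ≠ 0 ∧ k - k1 ≠ 0 ∧ |k - k1| ≤ (N : ℤ) then
      osc2 t k k1 * (f k1 * g (k - k1) - f k1 * f (k - k1)) else 0)

/-- The (finite) right-hand side of the `v`-equation of the `N`-th Galerkin system. -/
def galRHSv (N : ℕ) (t : ℝ) (f g : ℤ → ℂ) (k : ℤ) : ℂ :=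
  Complex.I * (k : ℂ) / 2 * ∑ k1 ∈ Finset.Icc (-(N : ℤ)) (N : ℤ),
    (if k1 ≠ 0 ∧ k - k1 ≠ 0 ∧ |k - k1| ≤ (N : ℤ) then
      osc2 t k k1 * (f k1 * g (k - k1) - g k1 * g (k - k1)) else 0)

/-- `(u,v)` solves the `N`-th Galerkin system on the set `S` with initial data
`(uin, vin)`. -/
def IsGalerkinSolution (N : ℕ) (uin vin : ℤ → ℂ) (S : Set ℝ) (u v : ℝ → ℤ → ℂ) : Prop :=
  (∀ k : ℤ, k ≠ 0 → u 0 k = uin k ∧ v 0 k = vin k) ∧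
  ∀ t ∈ S, ∀ k : ℤ, k ≠ 0 →
    HasDerivWithinAt (fun τ : ℝ => u τ k)
      (if |k| ≤ (N : ℤ) then galRHSu N t (u t) (v t) k else 0) S t ∧
    HasDerivWithinAt (fun τ : ℝ => v τ k)
      (if |k| ≤ (N : ℤ) then galRHSv N t (u t) (v t) k else 0) S t

open Finset

lemma norm_osc2 (t : ℝ) (k k1 : ℤ) : ‖osc2 t k k1‖ = 1 := by
  have h : 3 * Complex.I * (k : ℂ) * (k1 : ℂ) * ((k - k1 : ℤ) : ℂ) * (t : ℂ)
      = ((3 * k * k1 * (k - k1) * t : ℝ) : ℂ) * Complex.I := by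
    push_cast; ring
  rw [osc2, h, Complex.norm_exp_ofReal_mul_I]

lemma wt_eq_sq (s : ℝ) (k : ℤ) : wt s k = (|(k : ℝ)| ^ s) ^ 2 := by
  rw [wt, Int.cast_abs, ← Real.rpow_natCast, ← Real.rpow_mul (abs_nonneg _)]
  ring_nf

lemma wt_nonneg (s : ℝ) (k : ℤ) : 0 ≤ wt s k := by
  rw [wt_eq_sq]; positivity

lemma hnorm_nonneg (s : ℝ) (u : ℤ → ℂ) : 0 ≤ hnorm s u := Real.sqrt_nonneg _

lemma hnorm_sq (s : ℝ) (u : ℤ → ℂ) :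
    hnorm s u ^ 2 = ∑' k : {k : ℤ // k ≠ 0}, wt s k.1 * ‖u k.1‖ ^ 2 :=
  Real.sq_sqrt (tsum_nonneg fun _ => mul_nonneg (wt_nonneg _ _) (sq_nonneg _))

lemma summable_and_tsum_le_hnorm_sq {s : ℝ} {u : ℤ → ℂ} (hu : memH s u) {f : ℤ → ℝ}
    (hf : 0 ≤ f) (hf0 : f 0 = 0) (hfu : ∀ k ≠ 0, f k ≤ wt s k * ‖u k‖ ^ 2) :
    Summable f ∧ ∑' k, f k ≤ hnorm s u ^ 2 := by
  have hsub : Summable fun k : {k : ℤ // k ≠ 0} => f k :=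
    hu.of_nonneg_of_le (fun k => hf k) fun k => hfu k k.2
  refine ⟨(Subtype.val_injective.summable_iff fun k hk => ?_).mp hsub, ?_⟩
  · rwa [show k = 0 by simpa using hk]
  · rw [← tsum_subtype_eq_of_support_subset (s := {k | k ≠ 0}) fun k hk h0 => hk (h0 ▸ hf0),
      hnorm_sq]
    exact hsub.tsum_le_tsum (fun k => hfu k k.2) hu

lemma memH_and_hnorm_sq_le {s : ℝ} {w : ℤ → ℂ} {M : ℤ → ℝ} (hM : Summable M) (hM0 : 0 ≤ M)
    (hwM : ∀ k ≠ 0, wt s k * ‖w k‖ ^ 2 ≤ M k) : memH s w ∧ hnorm s w ^ 2 ≤ ∑' k, M k := by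
  have hw : memH s w := (hM.subtype _).of_nonneg_of_le
    (fun k => mul_nonneg (wt_nonneg _ _) (sq_nonneg _)) fun k => hwM k k.2
  refine ⟨hw, ?_⟩
  rw [hnorm_sq]
  exact hw.tsum_le_tsum_of_inj Subtype.val Subtype.val_injective (fun k _ => hM0 k)
    (fun k => hwM k k.2) hM

lemma Plow_eq_zero {N : ℕ} {k : ℤ} (hk : (N : ℤ) < |k|) (u : ℤ → ℂ) : Plow N u k = 0 := by
  simp [Plow, hk.not_ge]

lemma Qhigh_eq_zero {N : ℕ} {k : ℤ} (hk : |k| ≤ N) (u : ℤ → ℂ) : Qhigh N u k = 0 := by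
  simp [Qhigh, hk]

lemma norm_Plow_le (N : ℕ) (u : ℤ → ℂ) (k : ℤ) : ‖Plow N u k‖ ≤ ‖u k‖ := by
  unfold Plow; split_ifs <;> simp

lemma norm_Qhigh_le (N : ℕ) (u : ℤ → ℂ) (k : ℤ) : ‖Qhigh N u k‖ ≤ ‖u k‖ := by
  unfold Qhigh; split_ifs <;> simp

lemma sq_sum_norm_div_abs_le {α : ℝ} {u : ℤ → ℂ} (hu : memH (-α) u) (F : Finset ℤ) :
    (∑ k ∈ F, ‖u k‖ / |(k : ℝ)|) ^ 2 ≤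
      (∑ k ∈ F, |(k : ℝ)| ^ (2 * α - 2)) * hnorm (-α) u ^ 2 := by
  set f : ℤ → ℝ := fun k => if k = 0 then 0 else wt (-α) k * ‖u k‖ ^ 2
  have hf : 0 ≤ f := fun k => by
    dsimp only [f]; split_ifs
    exacts [le_rfl, mul_nonneg (wt_nonneg _ _) (sq_nonneg _)]
  obtain ⟨hfs, hfu⟩ := summable_and_tsum_le_hnorm_sq hu hf (if_pos rfl) fun k hk => (if_neg hk).le
  calc (∑ k ∈ F, ‖u k‖ / |(k : ℝ)|) ^ 2
      ≤ (∑ k ∈ F, |(k : ℝ)| ^ (2 * α - 2)) * ∑ k ∈ F, f k := by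
        refine sum_sq_le_sum_mul_sum_of_sq_le_mul F (fun k _ => by positivity)
          (fun k _ => hf k) fun k _ => ?_
        rcases eq_or_ne k 0 with rfl | hk
        · simpa using mul_nonneg (Real.rpow_nonneg le_rfl _) (hf 0)
        · have hk' : 0 < |(k : ℝ)| := abs_pos.mpr (Int.cast_ne_zero.mpr hk)
          rw [show f k = _ from if_neg hk, wt_eq_sq, div_pow, ← mul_assoc, mul_comm _ (_ ^ 2),
            ← Real.rpow_natCast (_ ^ (-α)), ← Real.rpow_mul hk'.le, ← Real.rpow_add hk',
            show 2 * α - 2 + -α * ((2 : ℕ) : ℝ) = -((2 : ℕ) : ℝ) by push_cast; ring,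
            Real.rpow_neg hk'.le, Real.rpow_natCast, div_eq_mul_inv]
    _ ≤ _ := by gcongr; exact (hfs.sum_le_tsum F fun k _ => hf k).trans hfu

lemma rpow_abs_add_div_abs_le {s N a b : ℝ} (hs : 0 ≤ s) (hN : 0 < N) (ha : |a| ≤ N)
    (hb : N ≤ |b|) : |a + b| ^ s / |b| ≤ 2 ^ s / N * |b| ^ s := by
  have hab : |a + b| ≤ 2 * |b| := by linarith [abs_add_le a b]
  rw [div_le_iff₀ (hN.trans_le hb)]
  calc |a + b| ^ s ≤ (2 * |b|) ^ s := Real.rpow_le_rpow (abs_nonneg _) hab hs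
    _ = 2 ^ s / N * |b| ^ s * N := by rw [Real.mul_rpow zero_le_two (abs_nonneg _)]; field_simp
    _ ≤ 2 ^ s / N * |b| ^ s * |b| := by gcongr

/-- The summands excluded from `B2` (`k1 = 0` or `k1 = k`) vanish on the right by `x / 0 = 0`. -/
lemma norm_B2_le {F : Finset ℤ} {φ : ℤ → ℂ} (hφ : ∀ k ∉ F, φ k = 0) (t : ℝ) (ψ : ℤ → ℂ)
    (k : ℤ) :
    ‖B2 t φ ψ k‖ ≤
      1 / 6 * ∑ k1 ∈ F, ‖φ k1‖ / |(k1 : ℝ)| * (‖ψ (k - k1)‖ / |((k - k1 : ℤ) : ℝ)|) := by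
  rw [B2, tsum_eq_sum fun k1 hk1 => by simp [hφ k1 hk1], norm_mul]
  refine mul_le_mul (by norm_num) ((norm_sum_le _ _).trans (sum_le_sum fun k1 _ => ?_))
    (norm_nonneg _) (by norm_num)
  split_ifs
  · rw [norm_div, norm_mul, norm_mul, norm_mul, norm_osc2, Complex.norm_intCast,
      Complex.norm_intCast, one_mul, mul_div_mul_comm]
  · rw [norm_zero]; positivity

lemma rpow_abs_mul_norm_B2_le {s : ℝ} (hs : 0 ≤ s) {N : ℕ} (hN : 0 < N) {φ ψ : ℤ → ℂ}
    (hφ : ∀ k, (N : ℤ) < |k| → φ k = 0) (hψ : ∀ k, |k| ≤ (N : ℤ) → ψ k = 0) (t : ℝ) (k : ℤ) :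
    |(k : ℝ)| ^ s * ‖B2 t φ ψ k‖ ≤
      2 ^ s / (6 * N) * ∑ k1 ∈ Finset.Icc (-(N : ℤ)) N,
        ‖φ k1‖ / |(k1 : ℝ)| * (|((k - k1 : ℤ) : ℝ)| ^ s * ‖ψ (k - k1)‖) := by
  have hF : ∀ k ∉ Finset.Icc (-(N : ℤ)) N, φ k = 0 := fun k hk =>
    hφ k (lt_of_not_ge fun h => hk (mem_Icc.mpr (abs_le.mp h)))
  have hterm : ∀ k1 ∈ Finset.Icc (-(N : ℤ)) N, |(k : ℝ)| ^ s / |((k - k1 : ℤ) : ℝ)| *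
      ‖ψ (k - k1)‖ ≤ 2 ^ s / N * (|((k - k1 : ℤ) : ℝ)| ^ s * ‖ψ (k - k1)‖) := by
    intro k1 hk1
    by_cases hψk : ψ (k - k1) = 0
    · simp [hψk]
    have hk1 : |(k1 : ℝ)| ≤ N := by exact_mod_cast abs_le.mpr (mem_Icc.mp hk1)
    have hk2 : (N : ℝ) ≤ |((k - k1 : ℤ) : ℝ)| := by
      exact_mod_cast (lt_of_not_ge fun h => hψk (hψ _ h)).le
    have hk : (k : ℝ) = k1 + ((k - k1 : ℤ) : ℝ) := by push_cast; ring
    rw [← mul_assoc, hk]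
    gcongr
    exact rpow_abs_add_div_abs_le hs (by exact_mod_cast hN) hk1 hk2
  calc |(k : ℝ)| ^ s * ‖B2 t φ ψ k‖
      ≤ |(k : ℝ)| ^ s * (1 / 6 * ∑ k1 ∈ Finset.Icc (-(N : ℤ)) N,
          ‖φ k1‖ / |(k1 : ℝ)| * (‖ψ (k - k1)‖ / |((k - k1 : ℤ) : ℝ)|)) := by
        gcongr; exact norm_B2_le hF t ψ k
    _ = 1 / 6 * ∑ k1 ∈ Finset.Icc (-(N : ℤ)) N, ‖φ k1‖ / |(k1 : ℝ)| *
          (|(k : ℝ)| ^ s / |((k - k1 : ℤ) : ℝ)| * ‖ψ (k - k1)‖) := by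
        rw [mul_left_comm, mul_sum, mul_sum, mul_sum]
        refine sum_congr rfl fun k1 _ => ?_
        ring
    _ ≤ 1 / 6 * ∑ k1 ∈ Finset.Icc (-(N : ℤ)) N, ‖φ k1‖ / |(k1 : ℝ)| *
          (2 ^ s / N * (|((k - k1 : ℤ) : ℝ)| ^ s * ‖ψ (k - k1)‖)) := by
        gcongr 1 / 6 * ∑ k1 ∈ _, _ * ?_ with k1 hk1
        exact hterm k1 hk1
    _ = _ := by
        rw [mul_sum, mul_sum]
        refine sum_congr rfl fun k1 _ => ?_
        ring

lemma summable_sq_sum_mul_sub_and_tsum_le {G : Type*} [AddGroup G] (F : Finset G)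
    {h g : G → ℝ} (hh : ∀ y ∈ F, 0 ≤ h y) (hg : Summable fun x => g x ^ 2) :
    Summable (fun x => (∑ y ∈ F, h y * g (x - y)) ^ 2) ∧
      ∑' x, (∑ y ∈ F, h y * g (x - y)) ^ 2 ≤ (∑ y ∈ F, h y) ^ 2 * ∑' x, g x ^ 2 := by
  have hshift : ∀ y, Summable fun x => g (x - y) ^ 2 := fun y =>
    (Equiv.subRight y).summable_iff.mpr hg
  set M : G → ℝ := fun x => (∑ y ∈ F, h y) * ∑ y ∈ F, h y * g (x - y) ^ 2
  have hM : Summable M := (summable_sum fun y _ => (hshift y).mul_left (h y)).mul_left _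
  have hle : ∀ x, (∑ y ∈ F, h y * g (x - y)) ^ 2 ≤ M x := fun x =>
    sum_sq_le_sum_mul_sum_of_sq_le_mul F hh (fun y hy => mul_nonneg (hh y hy) (sq_nonneg _))
      fun y _ => by rw [mul_pow, sq, mul_assoc]
  have htsum : ∑' x, M x = (∑ y ∈ F, h y) ^ 2 * ∑' x, g x ^ 2 := by
    calc ∑' x, M x = (∑ y ∈ F, h y) * ∑ y ∈ F, ∑' x, h y * g (x - y) ^ 2 := by
          rw [tsum_mul_left, Summable.tsum_finsetSum fun y _ => (hshift y).mul_left (h y)]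
      _ = (∑ y ∈ F, h y) * ∑ y ∈ F, h y * ∑' x, g x ^ 2 := by
          refine congrArg _ (sum_congr rfl fun y _ => ?_)
          rw [tsum_mul_left]
          exact congrArg _ ((Equiv.subRight y).tsum_eq fun x => g x ^ 2)
      _ = _ := by rw [← sum_mul]; ring
  exact ⟨hM.of_nonneg_of_le (fun _ => sq_nonneg _) hle,
    htsum ▸ (hM.of_nonneg_of_le (fun _ => sq_nonneg _) hle).tsum_le_tsum hle hM⟩

lemma memH_B2_and_hnorm_sq_le {s : ℝ} (hs : 0 ≤ s) {N : ℕ} (hN : 0 < N) {φ ψ v : ℤ → ℂ}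
    (hφ : ∀ k, (N : ℤ) < |k| → φ k = 0) (hψ : ∀ k, |k| ≤ (N : ℤ) → ψ k = 0)
    (hψv : ∀ k, ‖ψ k‖ ≤ ‖v k‖) (hv : memH s v) (t : ℝ) :
    memH s (B2 t φ ψ) ∧ hnorm s (B2 t φ ψ) ^ 2 ≤
      (2 ^ s / (6 * N : ℝ)) ^ 2 * (∑ k ∈ Finset.Icc (-(N : ℤ)) N, ‖φ k‖ / |(k : ℝ)|) ^ 2 *
        hnorm s v ^ 2 := by
  set g : ℤ → ℝ := fun k => |(k : ℝ)| ^ s * ‖ψ k‖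
  obtain ⟨hg, hgv⟩ := summable_and_tsum_le_hnorm_sq hv (f := fun k => g k ^ 2)
    (fun _ => sq_nonneg _) (by simp [g, hψ 0 (abs_zero.trans_le (Int.natCast_nonneg N))])
    fun k _ => by simp only [g]; rw [wt_eq_sq, ← mul_pow]; gcongr; exact hψv k
  obtain ⟨hconv, hconv_le⟩ := summable_sq_sum_mul_sub_and_tsum_le (Finset.Icc (-(N : ℤ)) N)
    (h := fun k => ‖φ k‖ / |(k : ℝ)|) (fun _ _ => by positivity) hg
  obtain ⟨hmem, hB⟩ := memH_and_hnorm_sq_le (hconv.mul_left ((2 ^ s / (6 * N : ℝ)) ^ 2))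
    (fun _ => mul_nonneg (sq_nonneg _) (sq_nonneg _)) fun k _ => by
      rw [wt_eq_sq, ← mul_pow, ← mul_pow]
      exact pow_le_pow_left₀ (by positivity) (rpow_abs_mul_norm_B2_le hs hN hφ hψ t k) 2
  refine ⟨hmem, (hB.trans_eq tsum_mul_left).trans ?_⟩
  rw [mul_assoc]
  gcongr
  exact hconv_le.trans (by gcongr)

theorem b2_high_low_estimate_general (s α : ℝ) (hs : 0 ≤ s)
    (hα : α < 1 / 2) :
    ∃ C : ℝ, ∀ N : ℕ, 0 < N → ∀ t : ℝ, ∀ u v : ℤ → ℂ,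
      memH (-α) u → memH s v →
      memH s (B2 t (Plow N u) (Qhigh N v)) ∧
      hnorm s (B2 t (Plow N u) (Qhigh N v)) ≤
        C / (N : ℝ) * hnorm (-α) u * hnorm s v := by
  set K := ∑' k : ℤ, |(k : ℝ)| ^ (2 * α - 2)
  have hK : Summable fun k : ℤ => |(k : ℝ)| ^ (2 * α - 2) := by
    simpa using Real.summable_abs_int_rpow (b := 2 - 2 * α) (by linarith)
  have hK0 : 0 ≤ K := tsum_nonneg fun _ => by positivity
  refine ⟨2 ^ s * √K / 6, fun N hN t u v hu hv => ?_⟩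
  obtain ⟨hmem, hB⟩ := memH_B2_and_hnorm_sq_le hs hN (fun k hk => Plow_eq_zero hk u)
    (fun k hk => Qhigh_eq_zero hk v) (norm_Qhigh_le N v) hv t
  have hl1 : (∑ k ∈ Finset.Icc (-(N : ℤ)) N, ‖Plow N u k‖ / |(k : ℝ)|) ^ 2 ≤
      K * hnorm (-α) u ^ 2 :=
    calc _ ≤ (∑ k ∈ Finset.Icc (-(N : ℤ)) N, ‖u k‖ / |(k : ℝ)|) ^ 2 := by
          gcongr with k; exact norm_Plow_le N u k
      _ ≤ _ := (sq_sum_norm_div_abs_le hu _).trans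
          (by gcongr; exact hK.sum_le_tsum _ fun _ _ => by positivity)
  have hC : 0 ≤ 2 ^ s * √K / 6 / N * hnorm (-α) u * hnorm s v :=
    mul_nonneg (mul_nonneg (by positivity) (hnorm_nonneg _ _)) (hnorm_nonneg _ _)
  refine ⟨hmem, (pow_le_pow_iff_left₀ (hnorm_nonneg _ _) hC two_ne_zero).mp ?_⟩
  calc _ ≤ (2 ^ s / (6 * N)) ^ 2 * (K * hnorm (-α) u ^ 2) * hnorm s v ^ 2 := by
        refine hB.trans ?_; gcongr
    _ = _ := by
        simp only [div_pow, mul_pow, Real.sq_sqrt hK0]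
        ring

/-- High-low frequency estimate for `B₂`. -/
theorem b2_high_low_estimate (s α : ℝ) (hs : 0 ≤ s) (hα0 : 0 ≤ α)
    (hα : α < 1 / 2) :
    ∃ C : ℝ, ∀ N : ℕ, 0 < N → ∀ t : ℝ, ∀ u v : ℤ → ℂ,
      memH (-α) u → memH s v →
      memH s (B2 t (Plow N u) (Qhigh N v)) ∧
      hnorm s (B2 t (Plow N u) (Qhigh N v)) ≤
        C / (N : ℝ) * hnorm (-α) u * hnorm s v :=
  b2_high_low_estimate_general s α hs hα
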